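/- For a family {F_t : t ∈ (0,∞)} of measurable functions on ℝ^d and λ > 0, the pointwise inequality λ [N_λ(F_t : t ∈ (0,∞))(x)]^{1/2} ≤ C ( 𝒮₂(F_t)(x) + λ [N_{λ/3}(F_{2^k} : k ∈ ℤ)(x)]^{1/2} ) holds for an absolute constant C, where 𝒮₂ is the short 2-jump operator. -/

import Mathlib

open Set

/-- The `q`-variation of a family `F : ℝ → ℝ` over an index set `I`. -/
noncomputable def eVariation (q : ℝ) (F : ℝ → ℝ) (I : Set ℝ) : ENNReal :=
  ⨆ (N : ℕ) (t : Fin (N + 1) → ℝ) (_ : StrictMono t) (_ : ∀ i, t i ∈ I),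
    (∑ i : Fin N, (ENNReal.ofReal |F (t i.succ) - F (t i.castSucc)|) ^ q) ^ (1 / q)

/-- The `λ`-jump count of a family `F : ℝ → ℝ` over an index set `I`. -/
noncomputable def eJumpCount (lam : ℝ) (F : ℝ → ℝ) (I : Set ℝ) : ENNReal :=
  ⨆ (N : ℕ) (t : Fin (N + 1) → ℝ) (_ : StrictMono t) (_ : ∀ i, t i ∈ I)
    (_ : ∀ i : Fin N, lam < |F (t i.succ) - F (t i.castSucc)|), (N : ENNReal)

/-- The short 2-jump operator: `𝒮₂(F)(x) = (∑_{k ∈ ℤ} V₂(F_t(x) : t ∈ [2^{k-1},2^k])²)^{1/2}`. -/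
noncomputable def shortJump (F : ℝ → ℝ) : ENNReal :=
  (∑' k : ℤ, (eVariation 2 F (Set.Icc ((2 : ℝ) ^ (k - 1)) ((2 : ℝ) ^ k))) ^ 2) ^ ((1 : ℝ) / 2)


open scoped ENNReal

private lemma le_eJumpCount (lam : ℝ) (f : ℝ → ℝ) (I : Set ℝ) (N : ℕ) (t : Fin (N+1) → ℝ)
    (h1 : StrictMono t) (h2 : ∀ i, t i ∈ I)
    (h3 : ∀ i : Fin N, lam < |f (t i.succ) - f (t i.castSucc)|) :
    (N : ℝ≥0∞) ≤ eJumpCount lam f I :=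
  le_iSup_of_le N <| le_iSup_of_le t <| le_iSup_of_le h1 <| le_iSup_of_le h2 <|
    le_iSup_of_le h3 le_rfl

private lemma le_eVariation (q : ℝ) (f : ℝ → ℝ) (I : Set ℝ) (N : ℕ) (t : Fin (N+1) → ℝ)
    (h1 : StrictMono t) (h2 : ∀ i, t i ∈ I) :
    (∑ i : Fin N, (ENNReal.ofReal |f (t i.succ) - f (t i.castSucc)|) ^ q) ^ (1/q)
      ≤ eVariation q f I :=
  le_iSup_of_le N <| le_iSup_of_le t <| le_iSup_of_le h1 <| le_iSup_of_le h2 le_rfl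

private lemma sqrt_sq' (x : ℝ≥0∞) : (x ^ (2:ℕ)) ^ ((1:ℝ)/2) = x := by
  rw [← ENNReal.rpow_natCast x 2, ← ENNReal.rpow_mul]
  norm_num

private lemma sq_sqrt' (x : ℝ≥0∞) : (x ^ ((1:ℝ)/2)) ^ (2:ℕ) = x := by
  rw [← ENNReal.rpow_natCast (x ^ ((1:ℝ)/2)) 2, ← ENNReal.rpow_mul]
  norm_num

private lemma le_of_sq_le_sq' {x y : ℝ≥0∞} (h : x ^ (2:ℕ) ≤ y ^ (2:ℕ)) : x ≤ y := by
  have h2 := ENNReal.rpow_le_rpow h (by norm_num : (0:ℝ) ≤ 1/2)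
  rwa [sqrt_sq', sqrt_sq'] at h2

private noncomputable def greedyChain (g : ℝ → ℝ) (c : ℝ) (X Y : ℕ → ℝ) : ℕ → ℝ
  | 0 => X 0
  | n+1 => if c < |g (X (n+1)) - g (greedyChain g c X Y n)| then X (n+1) else Y (n+1)

private lemma varBound (f : ℝ → ℝ) (ε : ℝ) (hε : 0 ≤ ε) (I : Set ℝ) (n : ℕ)
    (a b : Fin n → ℝ)
    (hab : ∀ j, a j < b j)
    (hsep : ∀ j j' : Fin n, (j:ℕ) + 2 ≤ (j':ℕ) → b j < a j')
    (hma : ∀ j, a j ∈ I) (hmb : ∀ j, b j ∈ I)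
    (hjump : ∀ j, ε < |f (b j) - f (a j)|) :
    ENNReal.ofReal (ε^2) * n ≤ 2 * (eVariation 2 f I) ^ (2:ℕ) := by
  rcases n with _ | n0
  · simp
  set h : ℕ := (n0+2)/2 with hh
  have hfacts : 1 ≤ h ∧ 2*h ≤ n0+2 ∧ n0+1 ≤ 2*h := by omega
  obtain ⟨hf1, hf2, hf3⟩ := hfacts
  set M : ℕ := 2*h-1 with hM
  have hM1 : M + 1 = 2*h := by omega
  set E : ℕ → Fin (n0+1) := fun r => ⟨min (2*r) n0, by omega⟩ with hE
  set c : Fin (M+1) → ℝ :=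
    fun j => if j.val % 2 = 0 then a (E (j.val/2)) else b (E (j.val/2)) with hc
  have hEval : ∀ r, 2*r ≤ n0 → ((E r : Fin (n0+1)) : ℕ) = 2*r := by
    intro r hr; simp [hE, min_eq_left hr]
  -- strict mono
  have hmono : StrictMono c := by
    rw [Fin.strictMono_iff_lt_succ]
    intro i
    have hiM : (i:ℕ) < M := i.isLt
    have hcs : (i.castSucc : ℕ) = (i:ℕ) := rfl
    have hss : (i.succ : ℕ) = (i:ℕ) + 1 := rfl
    rcases Nat.mod_two_eq_zero_or_one (i:ℕ) with hpar | hpar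
    · have e1 : c i.castSucc = a (E ((i:ℕ)/2)) := by simp [hc, hcs, hpar]
      have hp2 : ((i:ℕ)+1) % 2 = 1 := by omega
      have hd2 : ((i:ℕ)+1) / 2 = (i:ℕ)/2 := by omega
      have e2 : c i.succ = b (E ((i:ℕ)/2)) := by simp [hc, hss, hp2, hd2]
      rw [e1, e2]; exact hab _
    · have e1 : c i.castSucc = b (E ((i:ℕ)/2)) := by simp [hc, hcs, hpar]
      have hp2 : ((i:ℕ)+1) % 2 = 0 := by omega
      have hd2 : ((i:ℕ)+1) / 2 = (i:ℕ)/2 + 1 := by omega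
      have e2 : c i.succ = a (E ((i:ℕ)/2 + 1)) := by simp [hc, hss, hp2, hd2]
      rw [e1, e2]
      apply hsep
      have r1 : ((E ((i:ℕ)/2) : Fin (n0+1)) : ℕ) = 2*((i:ℕ)/2) := hEval _ (by omega)
      have r2 : ((E ((i:ℕ)/2 + 1) : Fin (n0+1)) : ℕ) = 2*((i:ℕ)/2+1) := hEval _ (by omega)
      omega
  have hmem : ∀ j, c j ∈ I := by
    intro j; rw [hc]; dsimp only; split
    · exact hma _
    · exact hmb _
  -- the sum bound
  set T : ℝ≥0∞ := ∑ i : Fin M, (ENNReal.ofReal |f (c i.succ) - f (c i.castSucc)|) ^ (2:ℝ) with hT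
  have hterm : ∀ r : Fin h, ENNReal.ofReal (ε^2) ≤
      (ENNReal.ofReal |f (c (⟨2*(r:ℕ), by omega⟩ : Fin M).succ) -
        f (c (⟨2*(r:ℕ), by omega⟩ : Fin M).castSucc)|) ^ (2:ℝ) := by
    intro r
    have hr2 : 2*(r:ℕ) ≤ n0 := by have := r.isLt; omega
    have e1 : c (⟨2*(r:ℕ), by omega⟩ : Fin M).castSucc = a (E (r:ℕ)) := by
      have : (2*(r:ℕ)) % 2 = 0 := by omega
      have hdd : (2*(r:ℕ))/2 = (r:ℕ) := by omega
      simp [hc, Fin.castSucc, this, hdd]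
    have e2 : c (⟨2*(r:ℕ), by omega⟩ : Fin M).succ = b (E (r:ℕ)) := by
      have h1 : (2*(r:ℕ)+1) % 2 = 1 := by omega
      have h2 : (2*(r:ℕ)+1)/2 = (r:ℕ) := by omega
      simp [hc, Fin.succ, h1, h2]
    rw [e1, e2]
    have h0 : (ENNReal.ofReal ε) ^ (2:ℝ) = ENNReal.ofReal (ε^2) := by
      rw [show (2:ℝ) = ((2:ℕ):ℝ) by norm_num, ENNReal.rpow_natCast, ENNReal.ofReal_pow hε]
    rw [← h0]
    exact ENNReal.rpow_le_rpow (ENNReal.ofReal_le_ofReal (le_of_lt (hjump _))) (by norm_num)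
  have hTlow : (h : ℝ≥0∞) * ENNReal.ofReal (ε^2) ≤ T := by
    set emb : Fin h → Fin M := fun r => ⟨2*(r:ℕ), by omega⟩ with hemb
    have hinj : Function.Injective emb := by
      intro r r' hrr
      have : (emb r : ℕ) = (emb r' : ℕ) := by rw [hrr]
      simp only [hemb] at this
      exact Fin.ext (by omega)
    calc (h : ℝ≥0∞) * ENNReal.ofReal (ε^2)
        = (Finset.univ : Finset (Fin h)).card • ENNReal.ofReal (ε^2) := by
          simp [nsmul_eq_mul]
      _ ≤ ∑ r : Fin h, (ENNReal.ofReal |f (c (emb r).succ) - f (c (emb r).castSucc)|) ^ (2:ℝ) :=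
          Finset.card_nsmul_le_sum _ _ _ (fun r _ => hterm r)
      _ = ∑ i ∈ Finset.univ.image emb,
            (ENNReal.ofReal |f (c i.succ) - f (c i.castSucc)|) ^ (2:ℝ) := by
          rw [Finset.sum_image (fun x _ y _ hxy => hinj hxy)]
      _ ≤ T := Finset.sum_le_sum_of_subset (Finset.subset_univ _)
  have hvar : T ^ ((1:ℝ)/2) ≤ eVariation 2 f I := by
    rw [hT]
    exact le_eVariation 2 f I M c hmono hmem
  have hvar2 : T ≤ (eVariation 2 f I) ^ (2:ℕ) := by
    calc T = (T ^ ((1:ℝ)/2)) ^ (2:ℕ) := (sq_sqrt' T).symm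
      _ ≤ (eVariation 2 f I) ^ (2:ℕ) := pow_le_pow_left' hvar 2
  calc ENNReal.ofReal (ε^2) * (n0+1 : ℕ)
      ≤ ENNReal.ofReal (ε^2) * ((2*h : ℕ) : ℝ≥0∞) := by
        exact mul_le_mul_right (by exact_mod_cast Nat.cast_le.mpr hf3) _
    _ = 2 * ((h : ℝ≥0∞) * ENNReal.ofReal (ε^2)) := by push_cast; ring
    _ ≤ 2 * T := mul_le_mul_right hTlow 2
    _ ≤ 2 * (eVariation 2 f I) ^ (2:ℕ) := mul_le_mul_right hvar2 2

private lemma jumpBound (f : ℝ → ℝ) (thr big : ℝ) (h1 : 0 < thr) (h2 : 2*thr < big)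
    (I : Set ℝ) (m : ℕ) (x y : Fin m → ℝ)
    (hxy : ∀ j, x j < y j)
    (hsep : ∀ j j' : Fin m, j < j' → y j < x j')
    (hmx : ∀ j, x j ∈ I) (hmy : ∀ j, y j ∈ I)
    (hjump : ∀ j, big < |f (y j) - f (x j)|) :
    (m : ℝ≥0∞) ≤ 2 * eJumpCount thr f I := by
  rcases m with _ | m0
  · simp
  set X : ℕ → ℝ := fun r => x ⟨min r m0, by omega⟩ with hX
  set Y : ℕ → ℝ := fun r => y ⟨min r m0, by omega⟩ with hY
  have hxyn : ∀ n, X n < Y n := fun n => hxy _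
  have hbign : ∀ n, big < |f (Y n) - f (X n)| := fun n => hjump _
  set w : ℕ → ℝ := greedyChain f thr X Y with hw
  have hwsucc : ∀ n, w (n+1) =
      if thr < |f (X (n+1)) - f (w n)| then X (n+1) else Y (n+1) := by
    intro n; rw [hw]; rfl
  have hXY : ∀ n, w n = X n ∨ w n = Y n := by
    intro n
    cases n with
    | zero => left; rfl
    | succ n =>
      rw [hwsucc]
      split
      · left; rfl
      · right; rfl
  have hjmp : ∀ n, thr < |f (w (n+1)) - f (w n)| := by
    intro n
    rw [hwsucc]
    split
    · next hcond => exact hcond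
    · next hcond =>
      push_neg at hcond
      have t1 : |f (Y (n+1)) - f (X (n+1))| ≤
          |f (Y (n+1)) - f (w n)| + |f (w n) - f (X (n+1))| := abs_sub_le _ _ _
      have t2 : |f (w n) - f (X (n+1))| = |f (X (n+1)) - f (w n)| := abs_sub_comm _ _
      have := hbign (n+1)
      linarith
  have hlt : ∀ n, n < m0 → w n < w (n+1) := by
    intro n hn
    have e1 : w n ≤ Y n := by
      rcases hXY n with h | h
      · rw [h]; exact (hxyn n).le
      · rw [h]
    have e2 : X (n+1) ≤ w (n+1) := by
      rcases hXY (n+1) with h | h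
      · rw [h]
      · rw [h]; exact (hxyn (n+1)).le
    have e3 : Y n < X (n+1) := by
      apply hsep
      show (⟨min n m0, _⟩ : Fin (m0+1)) < ⟨min (n+1) m0, _⟩
      simp [Fin.lt_def]
      omega
    linarith
  -- main chain
  have hchain : ((m0 : ℕ) : ℝ≥0∞) ≤ eJumpCount thr f I := by
    apply le_eJumpCount thr f I m0 (fun j => w j.val)
    · rw [Fin.strictMono_iff_lt_succ]
      intro i
      exact hlt i.val i.isLt
    · intro j
      rcases hXY j.val with h | h
      · rw [h]; exact hmx _
      · rw [h]; exact hmy _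
    · intro i
      exact hjmp i.val
  -- single jump chain
  have hone : (1 : ℝ≥0∞) ≤ eJumpCount thr f I := by
    set x0 : ℝ := x ⟨0, by omega⟩ with hx0
    set y0 : ℝ := y ⟨0, by omega⟩ with hy0
    have hchain1 := le_eJumpCount thr f I 1 (![x0, y0])
      (by
        rw [Fin.strictMono_iff_lt_succ]
        intro i
        fin_cases i
        simpa [hx0, hy0] using hxy ⟨0, by omega⟩)
      (by
        intro j
        fin_cases j
        · simpa [hx0] using hmx ⟨0, by omega⟩
        · simpa [hy0] using hmy ⟨0, by omega⟩)
      (by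
        intro i
        fin_cases i
        have hj := hjump ⟨0, by omega⟩
        have hgoal : thr < |f y0 - f x0| := by rw [hx0, hy0]; linarith
        simpa using hgoal)
    simpa using hchain1
  have : ((m0+1 : ℕ) : ℝ≥0∞) = (m0 : ℝ≥0∞) + 1 := by push_cast; ring
  rw [this, two_mul]
  exact add_le_add hchain hone

private lemma chain_bound (f : ℝ → ℝ) (lam : ℝ) (hl : 0 < lam) (N : ℕ) (t : Fin (N+1) → ℝ)
    (ht : StrictMono t) (hmem : ∀ i, t i ∈ Set.Ioi (0:ℝ))
    (hjump : ∀ i : Fin N, lam < |f (t i.succ) - f (t i.castSucc)|) :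
    ENNReal.ofReal (lam^2) * N ≤
      162 * (∑' k : ℤ, (eVariation 2 f (Set.Icc ((2:ℝ)^(k-1)) ((2:ℝ)^k))) ^ 2) +
      ENNReal.ofReal (lam^2) *
        (2 * eJumpCount (lam/3) f {r : ℝ | ∃ k : ℤ, r = (2:ℝ)^k}) := by
  classical
  set κ : Fin N → ℤ := fun i => Int.log 2 (t i.castSucc) with hκdef
  set μ : Fin N → ℤ := fun i => Int.log 2 (t i.succ) with hμdef
  have hpos : ∀ j : Fin (N+1), 0 < t j := fun j => hmem j
  have hsu : ∀ i : Fin N, t i.castSucc < t i.succ := fun i => ht (Fin.castSucc_lt_succ (i := i))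
  have hκ1 : ∀ i, (2:ℝ)^(κ i) ≤ t i.castSucc := by
    intro i
    have := Int.zpow_log_le_self (R := ℝ) (b := 2) one_lt_two (hpos i.castSucc)
    simpa using this
  have hκ2 : ∀ i, t i.castSucc < (2:ℝ)^(κ i + 1) := by
    intro i
    have := Int.lt_zpow_succ_log_self (R := ℝ) (b := 2) one_lt_two (t i.castSucc)
    simpa using this
  have hμ1 : ∀ i, (2:ℝ)^(μ i) ≤ t i.succ := by
    intro i
    have := Int.zpow_log_le_self (R := ℝ) (b := 2) one_lt_two (hpos i.succ)
    simpa using this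
  have hμ2 : ∀ i, t i.succ < (2:ℝ)^(μ i + 1) := by
    intro i
    have := Int.lt_zpow_succ_log_self (R := ℝ) (b := 2) one_lt_two (t i.succ)
    simpa using this
  have hκμ : ∀ i, κ i ≤ μ i := fun i => Int.log_mono_right (hpos i.castSucc) (hsu i).le
  set Sp : Fin N → Prop := fun i => κ i = μ i ∨
      lam/9 < |f ((2:ℝ)^(κ i + 1)) - f (t i.castSucc)| ∨
      lam/9 < |f (t i.succ) - f ((2:ℝ)^(μ i))| with hSpdef
  have hex : ∀ i, ∃ av bv : ℝ, ∃ kk : ℤ, Sp i →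
      (t i.castSucc ≤ av ∧ av < bv ∧ bv ≤ t i.succ ∧
       av ∈ Set.Icc ((2:ℝ)^(kk-1)) ((2:ℝ)^kk) ∧ bv ∈ Set.Icc ((2:ℝ)^(kk-1)) ((2:ℝ)^kk) ∧
       lam/9 < |f bv - f av|) := by
    intro i
    by_cases h1 : κ i = μ i
    · refine ⟨t i.castSucc, t i.succ, κ i + 1, fun _ => ?_⟩
      refine ⟨le_refl _, hsu i, le_refl _, ?_, ?_, ?_⟩
      · exact ⟨by rw [show κ i + 1 - 1 = κ i by ring]; exact hκ1 i, (hκ2 i).le⟩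
      · constructor
        · rw [show κ i + 1 - 1 = κ i by ring]
          exact le_trans (hκ1 i) (hsu i).le
        · rw [h1]; exact (hμ2 i).le
      · have := hjump i; linarith
    · by_cases h2 : lam/9 < |f ((2:ℝ)^(κ i + 1)) - f (t i.castSucc)|
      · refine ⟨t i.castSucc, (2:ℝ)^(κ i + 1), κ i + 1, fun _ => ?_⟩
        have hκμ' : κ i + 1 ≤ μ i := by have := hκμ i; omega
        refine ⟨le_refl _, hκ2 i, ?_, ?_, ?_, h2⟩
        · calc (2:ℝ)^(κ i + 1) ≤ (2:ℝ)^(μ i) := zpow_le_zpow_right₀ one_le_two hκμ'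
            _ ≤ t i.succ := hμ1 i
        · exact ⟨by rw [show κ i + 1 - 1 = κ i by ring]; exact hκ1 i, (hκ2 i).le⟩
        · refine ⟨?_, le_refl _⟩
          rw [show κ i + 1 - 1 = κ i by ring]
          exact zpow_le_zpow_right₀ one_le_two (by omega)
      · refine ⟨(2:ℝ)^(μ i), t i.succ, μ i + 1, fun hSp => ?_⟩
        have h3 : lam/9 < |f (t i.succ) - f ((2:ℝ)^(μ i))| := by
          have hSp' : κ i = μ i ∨
              lam/9 < |f ((2:ℝ)^(κ i + 1)) - f (t i.castSucc)| ∨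
              lam/9 < |f (t i.succ) - f ((2:ℝ)^(μ i))| := hSp
          rcases hSp' with h | h | h
          · exact absurd h h1
          · exact absurd h h2
          · exact h
        have hne : (2:ℝ)^(μ i) ≠ t i.succ := by
          intro heq
          rw [heq] at h3
          simp at h3
          linarith
        have hκμ' : κ i + 1 ≤ μ i := by have := hκμ i; omega
        refine ⟨?_, lt_of_le_of_ne (hμ1 i) hne, le_refl _, ?_, ?_, h3⟩
        · calc t i.castSucc ≤ (2:ℝ)^(κ i + 1) := (hκ2 i).le
            _ ≤ (2:ℝ)^(μ i) := zpow_le_zpow_right₀ one_le_two hκμ'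
        · refine ⟨le_of_eq ?_, zpow_le_zpow_right₀ one_le_two (by omega)⟩
          rw [show μ i + 1 - 1 = μ i by ring]
        · constructor
          · rw [show μ i + 1 - 1 = μ i by ring]; exact hμ1 i
          · exact (hμ2 i).le
  choose a0 b0 kf hP using hex
  set A : Finset (Fin N) := Finset.univ.filter Sp with hA
  set B : Finset (Fin N) := Finset.univ.filter (fun i => ¬ Sp i) with hB
  have hAB : A.card + B.card = N := by
    rw [hA, hB, Finset.card_filter_add_card_filter_not]
    simp
  set D : Set ℝ := {r : ℝ | ∃ k : ℤ, r = (2:ℝ)^k} with hD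
  -- long jumps
  have hlong : ∀ i, ¬ Sp i →
      ((2:ℝ)^(κ i + 1) < (2:ℝ)^(μ i) ∧
        7*lam/9 < |f ((2:ℝ)^(μ i)) - f ((2:ℝ)^(κ i + 1))|) := by
    intro i hns
    have hns' : ¬(κ i = μ i ∨
        lam/9 < |f ((2:ℝ)^(κ i + 1)) - f (t i.castSucc)| ∨
        lam/9 < |f (t i.succ) - f ((2:ℝ)^(μ i))|) := hns
    push_neg at hns'
    obtain ⟨hn1, hn2, hn3⟩ := hns'
    have hle : (2:ℝ)^(κ i + 1) ≤ (2:ℝ)^(μ i) :=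
      zpow_le_zpow_right₀ one_le_two (by have := hκμ i; omega)
    have hbig : 7*lam/9 < |f ((2:ℝ)^(μ i)) - f ((2:ℝ)^(κ i + 1))| := by
      have T1 : |f (t i.succ) - f (t i.castSucc)| ≤
          |f (t i.succ) - f ((2:ℝ)^(μ i))| + |f ((2:ℝ)^(μ i)) - f (t i.castSucc)| :=
        abs_sub_le _ _ _
      have T2 : |f ((2:ℝ)^(μ i)) - f (t i.castSucc)| ≤
          |f ((2:ℝ)^(μ i)) - f ((2:ℝ)^(κ i + 1))| +
            |f ((2:ℝ)^(κ i + 1)) - f (t i.castSucc)| := abs_sub_le _ _ _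
      have := hjump i
      linarith
    have hne : (2:ℝ)^(κ i + 1) ≠ (2:ℝ)^(μ i) := by
      intro heq
      rw [heq] at hbig
      simp at hbig
      linarith
    exact ⟨lt_of_le_of_ne hle hne, hbig⟩
  have hBcard : (B.card : ℝ≥0∞) ≤ 2 * eJumpCount (lam/3) f D := by
    have hBi : ∀ j : Fin B.card, ¬ Sp (B.orderEmbOfFin rfl j) := by
      intro j
      have h : B.orderEmbOfFin rfl j ∈ Finset.univ.filter (fun i => ¬ Sp i) :=
        Finset.orderEmbOfFin_mem B rfl j
      exact (Finset.mem_filter.mp h).2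
    apply jumpBound f (lam/3) (7*lam/9) (by linarith) (by linarith) D B.card
      (fun j => (2:ℝ)^(κ (B.orderEmbOfFin rfl j) + 1))
      (fun j => (2:ℝ)^(μ (B.orderEmbOfFin rfl j)))
    · intro j; exact (hlong _ (hBi j)).1
    · intro j j' hjj
      have hii : B.orderEmbOfFin rfl j < B.orderEmbOfFin rfl j' :=
        (B.orderEmbOfFin rfl).strictMono hjj
      have h1 : (2:ℝ)^(μ (B.orderEmbOfFin rfl j)) ≤ t (B.orderEmbOfFin rfl j).succ := hμ1 _
      have h2 : t (B.orderEmbOfFin rfl j).succ ≤ t (B.orderEmbOfFin rfl j').castSucc := by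
        apply ht.monotone
        have hval : ((B.orderEmbOfFin rfl j : Fin N) : ℕ) < (B.orderEmbOfFin rfl j' : Fin N) := hii
        rw [Fin.le_def]
        simp only [Fin.val_succ, Fin.coe_castSucc]
        omega
      have h3 : t (B.orderEmbOfFin rfl j').castSucc < (2:ℝ)^(κ (B.orderEmbOfFin rfl j') + 1) :=
        hκ2 _
      linarith
    · intro j; rw [hD]; exact ⟨_, rfl⟩
    · intro j; rw [hD]; exact ⟨_, rfl⟩
    · intro j; exact (hlong _ (hBi j)).2
  -- short jumps
  have hAcard : ENNReal.ofReal (lam^2) * (A.card : ℝ≥0∞) ≤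
      162 * ∑' k : ℤ, (eVariation 2 f (Set.Icc ((2:ℝ)^(k-1)) ((2:ℝ)^k))) ^ 2 := by
    set V : ℤ → ℝ≥0∞ := fun k => (eVariation 2 f (Set.Icc ((2:ℝ)^(k-1)) ((2:ℝ)^k))) ^ 2 with hV
    set K : Finset ℤ := A.image kf with hK
    have hfib : A.card = ∑ k ∈ K, (A.filter (fun i => kf i = k)).card :=
      Finset.card_eq_sum_card_fiberwise (fun x hx => Finset.mem_image_of_mem kf hx)
    have hk : ∀ k ∈ K,
        ENNReal.ofReal ((lam/9)^2) * ((A.filter (fun i => kf i = k)).card : ℝ≥0∞) ≤ 2 * V k := by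
      intro k hkK
      set Ak := A.filter (fun i => kf i = k) with hAk
      have hmemAk : ∀ j : Fin Ak.card, Ak.orderEmbOfFin rfl j ∈ Ak := fun j =>
        Finset.orderEmbOfFin_mem _ rfl j
      have hSpk : ∀ j : Fin Ak.card, Sp (Ak.orderEmbOfFin rfl j) := by
        intro j
        have h : Ak.orderEmbOfFin rfl j ∈ A.filter (fun i => kf i = k) := hmemAk j
        have h2 : Ak.orderEmbOfFin rfl j ∈ Finset.univ.filter Sp := (Finset.mem_filter.mp h).1
        exact (Finset.mem_filter.mp h2).2
      have hkfk : ∀ j : Fin Ak.card, kf (Ak.orderEmbOfFin rfl j) = k := by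
        intro j
        have h : Ak.orderEmbOfFin rfl j ∈ A.filter (fun i => kf i = k) := hmemAk j
        exact (Finset.mem_filter.mp h).2
      have hvb := varBound f (lam/9) (by linarith) (Set.Icc ((2:ℝ)^(k-1)) ((2:ℝ)^k)) Ak.card
        (fun j => a0 (Ak.orderEmbOfFin rfl j)) (fun j => b0 (Ak.orderEmbOfFin rfl j))
        (fun j => (hP _ (hSpk j)).2.1)
        (by
          intro j j' hjj
          have hj1 : (j:ℕ) + 1 < Ak.card := by
            have := j'.isLt; omega
          have s1 : ((Ak.orderEmbOfFin rfl j : Fin N) : ℕ) <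
              ((Ak.orderEmbOfFin rfl ⟨(j:ℕ)+1, hj1⟩ : Fin N) : ℕ) :=
            (Ak.orderEmbOfFin rfl).strictMono (by rw [Fin.lt_def]; simp)
          have s2 : ((Ak.orderEmbOfFin rfl ⟨(j:ℕ)+1, hj1⟩ : Fin N) : ℕ) <
              ((Ak.orderEmbOfFin rfl j' : Fin N) : ℕ) :=
            (Ak.orderEmbOfFin rfl).strictMono (by rw [Fin.lt_def]; simp; omega)
          have c1 : b0 (Ak.orderEmbOfFin rfl j) ≤ t (Ak.orderEmbOfFin rfl j).succ :=
            (hP _ (hSpk j)).2.2.1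
          have c2 : t (Ak.orderEmbOfFin rfl j).succ < t (Ak.orderEmbOfFin rfl j').castSucc := by
            apply ht
            rw [Fin.lt_def]
            simp only [Fin.val_succ, Fin.coe_castSucc]
            omega
          have c3 : t (Ak.orderEmbOfFin rfl j').castSucc ≤ a0 (Ak.orderEmbOfFin rfl j') :=
            (hP _ (hSpk j')).1
          linarith)
        (by
          intro j
          have h := (hP _ (hSpk j)).2.2.2.1
          rw [hkfk j] at h
          exact h)
        (by
          intro j
          have h := (hP _ (hSpk j)).2.2.2.2.1
          rw [hkfk j] at h
          exact h)
        (fun j => (hP _ (hSpk j)).2.2.2.2.2)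
      rw [hV]
      exact hvb
    calc ENNReal.ofReal (lam^2) * (A.card:ℝ≥0∞)
        = 81 * (ENNReal.ofReal ((lam/9)^2) * (A.card:ℝ≥0∞)) := by
          rw [← mul_assoc]
          congr 1
          rw [show (81:ℝ≥0∞) = ENNReal.ofReal (81:ℝ) by norm_num,
            ← ENNReal.ofReal_mul (by norm_num)]
          congr 1
          ring
      _ ≤ 81 * (2 * ∑' k, V k) := by
          apply mul_le_mul_right
          calc ENNReal.ofReal ((lam/9)^2) * (A.card:ℝ≥0∞)
              = ∑ k ∈ K, ENNReal.ofReal ((lam/9)^2) *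
                  ((A.filter (fun i => kf i = k)).card : ℝ≥0∞) := by
                rw [hfib]
                push_cast
                rw [Finset.mul_sum]
            _ ≤ ∑ k ∈ K, 2 * V k := Finset.sum_le_sum hk
            _ = 2 * ∑ k ∈ K, V k := by rw [Finset.mul_sum]
            _ ≤ 2 * ∑' k, V k := mul_le_mul_right (ENNReal.sum_le_tsum K) 2
      _ = 162 * ∑' k, V k := by ring
  -- assemble
  have hNcast : (N : ℝ≥0∞) = (A.card : ℝ≥0∞) + (B.card : ℝ≥0∞) := by
    rw [show (N : ℝ≥0∞) = ((A.card + B.card : ℕ) : ℝ≥0∞) by rw [hAB], Nat.cast_add]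
  rw [hNcast, mul_add]
  exact add_le_add hAcard (mul_le_mul_right hBcard _)

/-- Splitting of jumps into short and long jumps: pointwise,
`λ [N_λ(F_t : t ∈ (0,∞))]^{1/2} ≤ C (𝒮₂(F) + λ [N_{λ/3}(F_{2^k} : k ∈ ℤ)]^{1/2})`. -/
theorem jump_le_short_add_long {d : ℕ} :
    ∃ C : ENNReal, 0 < C ∧ C < ⊤ ∧
      ∀ (F : ℝ → (Fin d → ℝ) → ℝ), (∀ t, Measurable (F t)) →
        ∀ (lam : ℝ), 0 < lam → ∀ x : Fin d → ℝ,
          ENNReal.ofReal lam * (eJumpCount lam (fun t => F t x) (Set.Ioi 0)) ^ ((1 : ℝ) / 2)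
            ≤ C * (shortJump (fun t => F t x) +
              ENNReal.ofReal lam *
                (eJumpCount (lam / 3) (fun t => F t x) {t : ℝ | ∃ k : ℤ, t = (2 : ℝ) ^ k})
                  ^ ((1 : ℝ) / 2)) := by
  classical
  refine ⟨13, by norm_num, by norm_num, ?_⟩
  intro F _ lam hl x
  set f : ℝ → ℝ := fun r => F r x with hf
  set Sig : ℝ≥0∞ := ∑' k : ℤ, (eVariation 2 f (Set.Icc ((2:ℝ)^(k-1)) ((2:ℝ)^k))) ^ 2 with hSig
  set J : ℝ≥0∞ := eJumpCount lam f (Set.Ioi 0) with hJdef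
  set J' : ℝ≥0∞ := eJumpCount (lam/3) f {r : ℝ | ∃ k : ℤ, r = (2:ℝ)^k} with hJ'def
  have hL2ne : ENNReal.ofReal (lam^2) ≠ 0 := by
    simp only [ne_eq, ENNReal.ofReal_eq_zero, not_le]
    positivity
  have hstep : ENNReal.ofReal (lam^2) * J ≤ 162 * Sig + ENNReal.ofReal (lam^2) * (2 * J') := by
    set Q : ℝ≥0∞ := 162 * Sig + ENNReal.ofReal (lam^2) * (2 * J') with hQ
    have hJle : J ≤ Q / ENNReal.ofReal (lam^2) := by
      rw [hJdef]
      refine iSup_le fun N => iSup_le fun tt => iSup_le fun h1 => iSup_le fun h2 =>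
        iSup_le fun h3 => ?_
      rw [ENNReal.le_div_iff_mul_le (Or.inl hL2ne) (Or.inl ENNReal.ofReal_ne_top), mul_comm]
      rw [hQ, hSig, hJ'def]
      exact chain_bound f lam hl N tt h1 h2 h3
    calc ENNReal.ofReal (lam^2) * J
        ≤ ENNReal.ofReal (lam^2) * (Q / ENNReal.ofReal (lam^2)) := mul_le_mul_right hJle _
      _ ≤ Q := ENNReal.mul_div_le
  set S : ℝ≥0∞ := shortJump f with hSdef
  set T : ℝ≥0∞ := ENNReal.ofReal lam * J' ^ ((1:ℝ)/2) with hTdef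
  have hSsq : S ^ (2:ℕ) = Sig := by
    have h0 : S = Sig ^ ((1:ℝ)/2) := by rw [hSdef, hSig]; rfl
    rw [h0, sq_sqrt']
  have hTsq : T ^ (2:ℕ) = ENNReal.ofReal (lam^2) * J' := by
    rw [hTdef, mul_pow, sq_sqrt', ← ENNReal.ofReal_pow hl.le]
  have hkey : (ENNReal.ofReal lam * J ^ ((1:ℝ)/2)) ^ (2:ℕ) ≤ (13 * (S + T)) ^ (2:ℕ) := by
    have e1 : (ENNReal.ofReal lam * J ^ ((1:ℝ)/2)) ^ (2:ℕ) = ENNReal.ofReal (lam^2) * J := by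
      rw [mul_pow, sq_sqrt', ← ENNReal.ofReal_pow hl.le]
    have e2 : (13 * (S + T)) ^ (2:ℕ) = 169 * (S + T)^(2:ℕ) := by rw [mul_pow]; norm_num
    rw [e1, e2]
    calc ENNReal.ofReal (lam^2) * J
        ≤ 162 * Sig + ENNReal.ofReal (lam^2) * (2*J') := hstep
      _ = 162 * S^(2:ℕ) + 2 * T^(2:ℕ) := by rw [hSsq, hTsq]; ring
      _ ≤ 169 * S^(2:ℕ) + 169 * T^(2:ℕ) :=
          add_le_add (mul_le_mul_left (by norm_num : (162:ℝ≥0∞) ≤ 169) _)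
            (mul_le_mul_left (by norm_num : (2:ℝ≥0∞) ≤ 169) _)
      _ = 169 * (S^(2:ℕ) + T^(2:ℕ)) := by ring
      _ ≤ 169 * (S+T)^(2:ℕ) := by
          apply mul_le_mul_right
          have hs : S^(2:ℕ) ≤ S * (S+T) := by
            rw [pow_two]; exact mul_le_mul_right le_self_add _
          have ht' : T^(2:ℕ) ≤ T * (S+T) := by
            rw [pow_two]; exact mul_le_mul_right le_add_self _
          calc S^(2:ℕ) + T^(2:ℕ) ≤ S*(S+T) + T*(S+T) := add_le_add hs ht'
            _ = (S+T)^(2:ℕ) := by ring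
  exact le_of_sq_le_sq' hkey
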